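/- arXiv:1209.2064 — 2 statements merged into one kernel-verified Lean document; each statement's English description precedes it below -/
import Mathlib

section
/- Let I ⊂ ℚ[S,T] be the ideal generated by (T−1)(T²−1), (S−1)(S²−1), and (S−T)(T−1), and let R₂ = ℚ[S,T]/I. Then for every integer ℓ ≥ 1 there exists a unique ℚ-algebra endomorphism ψ^ℓ of R₂ with ψ^ℓ(S) = S^ℓ and ψ^ℓ(T) = T^ℓ; moreover ψ^1 = id and ψ^k ∘ ψ^ℓ = ψ^{kℓ} for all k, ℓ ≥ 1, so these operations make R₂ a ψ-ring. -/
/-!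
A ℚ-algebra map out of `R₂` is the same as a pair of elements satisfying the three defining
relations, each of the form `(a - b) * (c - d) = 0`. Since `a - b ∣ aˡ - bˡ`, such a relation
survives raising all four entries to the `ℓ`-th power, so `S ↦ Sˡ, T ↦ Tˡ` is well defined.
Uniqueness, `ψ¹ = id` and `ψᵏ ∘ ψˡ = ψᵏˡ` all follow because `S` and `T` generate `R₂`.
-/

open MvPolynomial

/-- The defining ideal of the virtual K-theory of `ℙ(1,2)`:
`⟨(T-1)(T²-1), (S-1)(S²-1), (S-T)(T-1)⟩ ⊆ ℚ[S,T]`, with `S = X 0`, `T = X 1`. -/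
noncomputable def virtIdeal2 : Ideal (MvPolynomial (Fin 2) ℚ) :=
  Ideal.span
    {(X 1 - 1) * ((X 1) ^ 2 - 1),
     (X 0 - 1) * ((X 0) ^ 2 - 1),
     (X 0 - X 1) * (X 1 - 1)}

/-- `R₂ = ℚ[S,T]/⟨(T-1)(T²-1), (S-1)(S²-1), (S-T)(T-1)⟩`. -/
abbrev VirtK2 : Type := MvPolynomial (Fin 2) ℚ ⧸ virtIdeal2

/-- The image of `S` in `R₂`. -/
noncomputable def sElt : VirtK2 := Ideal.Quotient.mk virtIdeal2 (X 0)

/-- The image of `T` in `R₂`. -/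
noncomputable def tElt : VirtK2 := Ideal.Quotient.mk virtIdeal2 (X 1)

theorem pow_sub_pow_mul_pow_sub_pow_eq_zero {R : Type*} [CommRing R] {a b c d : R}
    (h : (a - b) * (c - d) = 0) (m n : ℕ) : (a ^ m - b ^ m) * (c ^ n - d ^ n) = 0 := by
  obtain ⟨p, hp⟩ := sub_dvd_pow_sub_pow a b m
  obtain ⟨q, hq⟩ := sub_dvd_pow_sub_pow c d n
  rw [hp, hq, mul_mul_mul_comm, h, zero_mul]

namespace VirtK2

section Lift

variable {A : Type*} [CommRing A] [Algebra ℚ A] (s t : A)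
  (hT : (t - 1) * (t ^ 2 - 1) = 0) (hS : (s - 1) * (s ^ 2 - 1) = 0)
  (hST : (s - t) * (t - 1) = 0)

noncomputable def lift : VirtK2 →ₐ[ℚ] A :=
  Ideal.Quotient.liftₐ virtIdeal2 (aeval ![s, t]) fun _ hp => RingHom.mem_ker.1 <| by
    refine (Ideal.span_le.2 ?_ : virtIdeal2 ≤ RingHom.ker (aeval (R := ℚ) ![s, t])) hp
    simp [Set.insert_subset_iff, hT, hS, hST]

theorem lift_sElt : lift s t hT hS hST sElt = s :=
  aeval_X ![s, t] 0

theorem lift_tElt : lift s t hT hS hST tElt = t :=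
  aeval_X ![s, t] 1

end Lift

@[ext]
theorem algHom_ext {A : Type*} [CommRing A] [Algebra ℚ A] {f g : VirtK2 →ₐ[ℚ] A}
    (hs : f sElt = g sElt) (ht : f tElt = g tElt) : f = g := by
  refine Ideal.Quotient.algHom_ext _ (MvPolynomial.algHom_ext fun i => ?_)
  fin_cases i
  exacts [hs, ht]

theorem tElt_sub_one_mul_sq_sub_one : (tElt - 1) * (tElt ^ 2 - 1) = 0 := by
  have h : (X 1 - 1) * ((X 1 : MvPolynomial (Fin 2) ℚ) ^ 2 - 1) ∈ virtIdeal2 :=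
    Ideal.subset_span (by simp)
  simpa [tElt] using Ideal.Quotient.eq_zero_iff_mem.2 h

theorem sElt_sub_one_mul_sq_sub_one : (sElt - 1) * (sElt ^ 2 - 1) = 0 := by
  have h : (X 0 - 1) * ((X 0 : MvPolynomial (Fin 2) ℚ) ^ 2 - 1) ∈ virtIdeal2 :=
    Ideal.subset_span (by simp)
  simpa [sElt] using Ideal.Quotient.eq_zero_iff_mem.2 h

theorem sElt_sub_tElt_mul_tElt_sub_one : (sElt - tElt) * (tElt - 1) = 0 := by
  have h : ((X 0 : MvPolynomial (Fin 2) ℚ) - X 1) * (X 1 - 1) ∈ virtIdeal2 :=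
    Ideal.subset_span (by simp)
  simpa [sElt, tElt] using Ideal.Quotient.eq_zero_iff_mem.2 h

noncomputable def adamsOp (ℓ : ℕ) : VirtK2 →ₐ[ℚ] VirtK2 :=
  lift (sElt ^ ℓ) (tElt ^ ℓ)
    (by simpa [← pow_mul, mul_comm] using
      pow_sub_pow_mul_pow_sub_pow_eq_zero tElt_sub_one_mul_sq_sub_one ℓ ℓ)
    (by simpa [← pow_mul, mul_comm] using
      pow_sub_pow_mul_pow_sub_pow_eq_zero sElt_sub_one_mul_sq_sub_one ℓ ℓ)
    (by simpa using pow_sub_pow_mul_pow_sub_pow_eq_zero sElt_sub_tElt_mul_tElt_sub_one ℓ ℓ)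

@[simp]
theorem adamsOp_sElt (ℓ : ℕ) : adamsOp ℓ sElt = sElt ^ ℓ :=
  lift_sElt ..

@[simp]
theorem adamsOp_tElt (ℓ : ℕ) : adamsOp ℓ tElt = tElt ^ ℓ :=
  lift_tElt ..

theorem eq_adamsOp {ℓ : ℕ} {f : VirtK2 →ₐ[ℚ] VirtK2} (hs : f sElt = sElt ^ ℓ)
    (ht : f tElt = tElt ^ ℓ) : f = adamsOp ℓ := by
  ext <;> simp [hs, ht]

theorem adamsOp_one : adamsOp 1 = AlgHom.id ℚ VirtK2 := by
  ext <;> simp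

theorem adamsOp_comp (k ℓ : ℕ) : (adamsOp k).comp (adamsOp ℓ) = adamsOp (k * ℓ) := by
  ext <;> simp [← pow_mul]

end VirtK2

theorem virtual_Ktheory_P12_adams_operations :
    (∀ ℓ : ℕ, 1 ≤ ℓ →
      ∃! f : VirtK2 →ₐ[ℚ] VirtK2, f sElt = sElt ^ ℓ ∧ f tElt = tElt ^ ℓ) ∧
    (∀ ψ : ℕ → (VirtK2 →ₐ[ℚ] VirtK2),
      (∀ ℓ : ℕ, 1 ≤ ℓ → ψ ℓ sElt = sElt ^ ℓ ∧ ψ ℓ tElt = tElt ^ ℓ) →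
      ψ 1 = AlgHom.id ℚ VirtK2 ∧
      ∀ k ℓ : ℕ, 1 ≤ k → 1 ≤ ℓ → (ψ k).comp (ψ ℓ) = ψ (k * ℓ)) := by
  refine ⟨fun ℓ _ => ⟨VirtK2.adamsOp ℓ, ⟨VirtK2.adamsOp_sElt ℓ, VirtK2.adamsOp_tElt ℓ⟩,
    fun f ⟨hs, ht⟩ => VirtK2.eq_adamsOp hs ht⟩, fun ψ hψ => ?_⟩
  have hψ_eq : ∀ ℓ, 1 ≤ ℓ → ψ ℓ = VirtK2.adamsOp ℓ := fun ℓ hℓ =>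
    VirtK2.eq_adamsOp (hψ ℓ hℓ).1 (hψ ℓ hℓ).2
  refine ⟨(hψ_eq 1 le_rfl).trans VirtK2.adamsOp_one, fun k ℓ hk hℓ => ?_⟩
  rw [hψ_eq k hk, hψ_eq ℓ hℓ, hψ_eq (k * ℓ) (Nat.mul_pos hk hℓ), VirtK2.adamsOp_comp]
end

section
/- Let I₃ ⊂ ℂ[σ,τ,ρ] be the ideal generated by the ten polynomials: σ³−2σ²+σ−τ²+τρ+τ−ρ²+ρ−1; (τ−1)(τ²−σ); (ρ−1)(ρ²−σ); (τ−1)(σ²−τ); (ρ−1)(σ²−ρ); σ²−στ−σρ+τ²ρ−τρ+ρ²−ρ+1; σ²−στ−σρ+τ²+τρ²−τρ−τ+1; (τ−1)(στ−1); (ρ−1)(σρ−1); and −σ²+στρ+σ−τ²+τρ−ρ². Let A = ℂ[σ,τ,ρ]/I₃. Then the ideal m of A generated by σ−1, τ−1 and ρ−1 is maximal, and the localization A_m is isomorphic as a ℂ-algebra to ℂ[u,v,w]/⟨u,v,w⟩². In particular A_m is a 4-dimensional local ℂ-algebra whose maximal ideal squares to zero. -/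
/-!
Let `𝔪 ⊂ R = ℂ[σ,τ,ρ]` be the ideal of the point `(1,1,1)`. Every generator of `I₃` vanishes
to second order there, so `I₃ ⊆ 𝔪²`; conversely `f = σ² + σ + 1`, which takes the value `3`
at `(1,1,1)`, satisfies `f 𝔪² ⊆ I₃`. So in `A = R/I₃` the square of `m = 𝔪/I₃` is killed by an
element outside `m`, and since `A/m²` is already local this gives `A_m ≅ A/m² = R/𝔪²`.
Translating `(1,1,1)` to the origin turns `R/𝔪²` into `ℂ[u,v,w]/⟨u,v,w⟩²`, whose basis is
`1, u, v, w`.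
-/

open MvPolynomial

/-- The defining ideal `I₃ ⊆ ℂ[σ,τ,ρ]` of the virtual K-theory of `ℙ(1,3)`,
with `σ = X 0`, `τ = X 1`, `ρ = X 2`. -/
noncomputable def virtIdeal3 : Ideal (MvPolynomial (Fin 3) ℂ) :=
  Ideal.span
    {(X 0) ^ 3 - 2 * (X 0) ^ 2 + X 0 - (X 1) ^ 2 + X 1 * X 2 + X 1 - (X 2) ^ 2 + X 2 - 1,
     (X 1 - 1) * ((X 1) ^ 2 - X 0),
     (X 2 - 1) * ((X 2) ^ 2 - X 0),
     (X 1 - 1) * ((X 0) ^ 2 - X 1),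
     (X 2 - 1) * ((X 0) ^ 2 - X 2),
     (X 0) ^ 2 - X 0 * X 1 - X 0 * X 2 + (X 1) ^ 2 * X 2 - X 1 * X 2 + (X 2) ^ 2 - X 2 + 1,
     (X 0) ^ 2 - X 0 * X 1 - X 0 * X 2 + (X 1) ^ 2 + X 1 * (X 2) ^ 2 - X 1 * X 2 - X 1 + 1,
     (X 1 - 1) * (X 0 * X 1 - 1),
     (X 2 - 1) * (X 0 * X 2 - 1),
     -(X 0) ^ 2 + X 0 * X 1 * X 2 + X 0 - (X 1) ^ 2 + X 1 * X 2 - (X 2) ^ 2}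

/-- `A = ℂ[σ,τ,ρ]/I₃`. -/
abbrev VirtK3 : Type := MvPolynomial (Fin 3) ℂ ⧸ virtIdeal3

/-- The augmentation ideal `m = ⟨σ - 1, τ - 1, ρ - 1⟩` of `A`. -/
noncomputable def augIdeal3 : Ideal VirtK3 :=
  Ideal.span
    {Ideal.Quotient.mk virtIdeal3 (X 0) - 1,
     Ideal.Quotient.mk virtIdeal3 (X 1) - 1,
     Ideal.Quotient.mk virtIdeal3 (X 2) - 1}

/-- `ℂ[u,v,w]/⟨u,v,w⟩²`, the K-theory of the crepant resolution `Z₃`. -/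
abbrev SquareZeroThreeVars : Type :=
  MvPolynomial (Fin 3) ℂ ⧸ ((Ideal.span {(X 0 : MvPolynomial (Fin 3) ℂ), X 1, X 2}) ^ 2)


theorem Finsupp.degree_lt_two_iff {σ : Type*} (x : σ →₀ ℕ) :
    x.degree < 2 ↔ x = 0 ∨ ∃ i, x = Finsupp.single i 1 := by
  rw [Nat.lt_succ_iff_lt_or_eq, Nat.lt_one_iff, Finsupp.degree_eq_zero_iff,
    ← Set.mem_ofPred_eq (p := fun d : σ →₀ ℕ => d.degree = 1), ← Finsupp.range_single_one]
  simp [eq_comm]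

namespace MvPolynomial

variable {σ R : Type*} [CommRing R]

theorem sub_C_eval_mem_span_X_sub_C (a : σ → R) (p : MvPolynomial σ R) :
    p - C (eval a p) ∈ Ideal.span (Set.range fun i => X i - C (a i)) := by
  induction p using MvPolynomial.induction_on with
  | C r => simp
  | add p q hp hq => simpa [add_sub_add_comm] using add_mem hp hq
  | mul_X p i hp =>
    have h : p * X i - C (eval a (p * X i)) =
        (p - C (eval a p)) * X i + C (eval a p) * (X i - C (a i)) := by
      simp only [eval_mul, eval_X, C_mul]
      ring
    rw [h]
    exact add_mem (Ideal.mul_mem_right _ _ hp)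
      (Ideal.mul_mem_left _ _ (Ideal.subset_span ⟨i, rfl⟩))

theorem ker_eval_eq_span_X_sub_C (a : σ → R) :
    RingHom.ker (eval a) = Ideal.span (Set.range fun i => X i - C (a i)) := by
  refine le_antisymm (fun p hp => ?_) (Ideal.span_le.mpr ?_)
  · simpa [RingHom.mem_ker.mp hp] using sub_C_eval_mem_span_X_sub_C a p
  · rintro _ ⟨i, rfl⟩
    simp

noncomputable def translate (a : σ → R) : MvPolynomial σ R ≃ₐ[R] MvPolynomial σ R :=
  AlgEquiv.ofAlgHom (aeval fun i => X i - C (a i)) (aeval fun i => X i + C (a i))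
    (algHom_ext fun i => by simp) (algHom_ext fun i => by simp)

theorem map_translate_idealOfVars (a : σ → R) :
    (idealOfVars σ R).map (translate a : MvPolynomial σ R →+* MvPolynomial σ R) =
      Ideal.span (Set.range fun i => X i - C (a i)) := by
  rw [Ideal.map_span, ← Set.range_comp]
  congr 2
  ext i
  simp [translate]

section Field

variable {k : Type*} [Field k]

variable (σ k) in
noncomputable def coeffsDegreeLeOne : MvPolynomial σ k →ₗ[k] k × (σ → k) where
  toFun p := (coeff 0 p, fun i => coeff (Finsupp.single i 1) p)
  map_add' p q := by ext <;> simp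
  map_smul' c p := by ext <;> simp

theorem ker_coeffsDegreeLeOne :
    LinearMap.ker (coeffsDegreeLeOne σ k) = (idealOfVars σ k ^ 2).restrictScalars k := by
  ext p
  simp only [LinearMap.mem_ker, coeffsDegreeLeOne, LinearMap.coe_mk, AddHom.coe_mk,
    Prod.mk_eq_zero, Submodule.restrictScalars_mem, mem_pow_idealOfVars_iff',
    Finsupp.degree_lt_two_iff, or_imp, forall_and, forall_eq, forall_exists_index]
  simp [_root_.funext_iff]

theorem coeffsDegreeLeOne_surjective [Fintype σ] :
    Function.Surjective (coeffsDegreeLeOne σ k) := by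
  classical
  rintro ⟨c, v⟩
  refine ⟨C c + ∑ i, monomial (Finsupp.single i 1) (v i),
    Prod.ext ?_ (_root_.funext fun i => ?_)⟩ <;>
    simp [coeffsDegreeLeOne, coeff_sum, coeff_monomial, coeff_C, Finsupp.single_left_inj,
      eq_comm (a := (0 : σ →₀ ℕ))]

theorem finrank_quotient_idealOfVars_sq [Fintype σ] :
    Module.finrank k (MvPolynomial σ k ⧸ idealOfVars σ k ^ 2) = 1 + Fintype.card σ := by
  have e := (Submodule.Quotient.restrictScalarsEquiv k (idealOfVars σ k ^ 2)).symm
  have e' := (coeffsDegreeLeOne σ k).quotKerEquivOfSurjective coeffsDegreeLeOne_surjective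
  rw [ker_coeffsDegreeLeOne] at e'
  rw [(e.trans e').finrank_eq]
  simp

end Field

end MvPolynomial

theorem Ideal.span_range_sq_le {ι R : Type*} [LinearOrder ι] [CommSemiring R] {v : ι → R}
    {K : Ideal R} (h : ∀ i j, i ≤ j → v i * v j ∈ K) : Ideal.span (Set.range v) ^ 2 ≤ K := by
  rw [pow_two, Ideal.span_mul_span', Ideal.span_le]
  rintro _ ⟨_, ⟨i, rfl⟩, _, ⟨j, rfl⟩, rfl⟩
  dsimp only
  rcases le_total i j with hij | hji
  · exact h i j hij
  · rw [mul_comm]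
    exact h j i hji

theorem Ideal.IsMaximal.isUnit_mk_pow {A : Type*} [CommRing A] {p : Ideal A} (hp : p.IsMaximal)
    (n : ℕ) {x : A} (hx : x ∉ p) : IsUnit (Ideal.Quotient.mk (p ^ n) x) := by
  obtain ⟨y, i, hi, hyx⟩ := hp.exists_inv hx
  have hnil : IsNilpotent (Ideal.Quotient.mk (p ^ n) i) :=
    ⟨n, by rw [← map_pow, Ideal.Quotient.eq_zero_iff_mem]; exact Ideal.pow_mem_pow hi n⟩
  refine isUnit_of_mul_isUnit_right (x := Ideal.Quotient.mk (p ^ n) y) ?_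
  rw [← map_mul, eq_sub_of_add_eq hyx, map_sub, map_one]
  exact hnil.isUnit_one_sub

theorem IsLocalization.of_surjective_of_ker_annihilated {S T : Type*} [CommRing S] [CommRing T]
    [Algebra S T] (M : Submonoid S) (hsurj : Function.Surjective (algebraMap S T))
    (hunit : ∀ m : M, IsUnit (algebraMap S T m))
    (hker : ∀ x, algebraMap S T x = 0 → ∃ m : M, m * x = 0) : IsLocalization M T where
  map_units := hunit
  surj z := by
    obtain ⟨x, rfl⟩ := hsurj z
    exact ⟨(x, 1), by simp⟩
  exists_of_eq {x y} h := by
    obtain ⟨m, hm⟩ := hker (x - y) (by rw [map_sub, h, sub_self])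
    exact ⟨m, by rwa [← sub_eq_zero, ← mul_sub]⟩

namespace Localization.AtPrime

variable {A : Type*} [CommRing A] {p : Ideal A} {n : ℕ}

theorem isLocalization_quotient_pow [p.IsMaximal] (hann : ∀ x ∈ p ^ n, ∃ s ∉ p, s * x = 0) :
    IsLocalization.AtPrime (A ⧸ p ^ n) p :=
  IsLocalization.of_surjective_of_ker_annihilated _ Ideal.Quotient.mk_surjective
    (fun s => Ideal.IsMaximal.isUnit_mk_pow ‹_› n s.2)
    (fun x hx => by
      obtain ⟨s, hs, hsx⟩ := hann x (Ideal.Quotient.eq_zero_iff_mem.mp hx)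
      exact ⟨⟨s, hs⟩, hsx⟩)

theorem nonempty_algEquiv_quotient_pow (k : Type*) [CommRing k] [Algebra k A] [p.IsMaximal]
    (hann : ∀ x ∈ p ^ n, ∃ s ∉ p, s * x = 0) :
    Nonempty (Localization.AtPrime p ≃ₐ[k] A ⧸ p ^ n) :=
  haveI := isLocalization_quotient_pow hann
  ⟨(IsLocalization.algEquiv p.primeCompl _ _).restrictScalars k⟩

theorem maximalIdeal_pow_eq_bot [p.IsPrime] (hann : ∀ x ∈ p ^ n, ∃ s ∉ p, s * x = 0) :
    IsLocalRing.maximalIdeal (Localization.AtPrime p) ^ n = ⊥ := by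
  rw [← Localization.AtPrime.map_eq_maximalIdeal, ← Ideal.map_pow, Ideal.map_eq_bot_iff_le_ker]
  intro x hx
  obtain ⟨s, hs, hsx⟩ := hann x hx
  rw [RingHom.mem_ker, IsLocalization.map_eq_zero_iff p.primeCompl]
  exact ⟨⟨s, hs⟩, hsx⟩

end Localization.AtPrime

local notation "𝔪" => RingHom.ker (MvPolynomial.eval (1 : Fin 3 → ℂ))

theorem virtIdeal3_le_sq : virtIdeal3 ≤ 𝔪 ^ 2 := by
  have hv : ∀ i j, (Ideal.Quotient.mk (𝔪 ^ 2) (X i) - 1) * (Ideal.Quotient.mk (𝔪 ^ 2) (X j) - 1)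
      = 0 := by
    intro i j
    rw [← map_one (Ideal.Quotient.mk (𝔪 ^ 2)), ← map_sub, ← map_sub, ← map_mul,
      Ideal.Quotient.eq_zero_iff_mem, pow_two]
    exact Ideal.mul_mem_mul (by simp) (by simp)
  simp only [virtIdeal3, Ideal.span_le, Set.insert_subset_iff, Set.singleton_subset_iff,
    SetLike.mem_coe, ← Ideal.Quotient.eq_zero_iff_mem, map_sub, map_add, map_mul, map_pow, map_neg,
    map_one, map_ofNat]
  set x := Ideal.Quotient.mk (𝔪 ^ 2) (X 0)
  set y := Ideal.Quotient.mk (𝔪 ^ 2) (X 1)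
  set z := Ideal.Quotient.mk (𝔪 ^ 2) (X 2)
  refine ⟨?_, ?_, ?_, ?_, ?_, ?_, ?_, ?_, ?_, ?_⟩
  · linear_combination x * hv 0 0 - hv 1 1 + hv 1 2 - hv 2 2
  · linear_combination -hv 0 1 + (y + 1) * hv 1 1
  · linear_combination -hv 0 2 + (z + 1) * hv 2 2
  · linear_combination (y - 1) * hv 0 0 + 2 * hv 0 1 - hv 1 1
  · linear_combination (z - 1) * hv 0 0 + 2 * hv 0 2 - hv 2 2
  · linear_combination hv 0 0 - hv 0 1 - hv 0 2 + z * hv 1 1 + hv 1 2 + hv 2 2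
  · linear_combination hv 0 0 - hv 0 1 - hv 0 2 + hv 1 1 + z * hv 1 2 + hv 2 2
  · linear_combination y * hv 0 1 + hv 1 1
  · linear_combination z * hv 0 2 + hv 2 2
  · linear_combination -hv 0 0 + z * hv 0 1 + hv 0 2 - hv 1 1 + 2 * hv 1 2 - hv 2 2

theorem virtIdeal3_le_ker_eval : virtIdeal3 ≤ 𝔪 :=
  virtIdeal3_le_sq.trans (Ideal.pow_le_self two_ne_zero)

/- At the other points of `Spec A` one of `τ, ρ` differs from `1`, and the generators
`(τ-1)(τ²-σ)`, `(τ-1)(στ-1)` (or their `ρ` versions) force `σ` to be a primitive cube root of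
unity: this is why `σ² + σ + 1` kills `𝔪²` modulo `I₃`. -/
theorem sq_le_colon_virtIdeal3 : 𝔪 ^ 2 ≤ virtIdeal3.colon {X 0 ^ 2 + X 0 + 1} := by
  have hrel := Ideal.span_le.mp (Ideal.mk_ker (I := virtIdeal3)).ge
  simp only [Set.insert_subset_iff, Set.singleton_subset_iff, SetLike.mem_coe, RingHom.mem_ker,
    map_sub, map_add, map_mul, map_pow, map_neg, map_one, map_ofNat] at hrel
  obtain ⟨r0, r1, r2, r3, r4, r5, r6, r7, r8, r9⟩ := hrel
  rw [ker_eval_eq_span_X_sub_C]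
  refine Ideal.span_range_sq_le fun i j hij => ?_
  rw [Submodule.mem_colon_singleton, smul_eq_mul, ← Ideal.Quotient.eq_zero_iff_mem]
  fin_cases i <;> fin_cases j <;> try exact absurd hij (by decide)
  all_goals
    simp only [Fin.zero_eta, Fin.mk_one, Fin.reduceFinMk, Fin.isValue, Pi.one_apply, map_sub,
      map_add, map_mul, map_pow, map_one]
    set x := Ideal.Quotient.mk virtIdeal3 (X 0)
    set y := Ideal.Quotient.mk virtIdeal3 (X 1)
    set z := Ideal.Quotient.mk virtIdeal3 (X 2)
  · linear_combination (x + 1) * r0 + r7 + r8 - r9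
  · linear_combination (y - 1) * r0 + r1 + 2 * r3 - r5 + r6
  · linear_combination (z - 1) * r0 + r2 + 2 * r4 + r5 - r6
  · linear_combination r1 + (y - 1) * r3 + r7
  · linear_combination (z - 1) * r3 + r5 + r9
  · linear_combination r2 + (z - 1) * r4 + r8

theorem augIdeal3_eq_map : augIdeal3 = Ideal.map (Ideal.Quotient.mk virtIdeal3) 𝔪 := by
  rw [ker_eval_eq_span_X_sub_C, Ideal.map_span, ← Set.range_comp, augIdeal3]
  congr 1
  ext
  simp [Fin.exists_fin_succ, eq_comm]

theorem augIdeal3_isMaximal : augIdeal3.IsMaximal := by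
  have := RingHom.ker_isMaximal_of_surjective (eval (1 : Fin 3 → ℂ)) fun c => ⟨C c, eval_C c⟩
  rw [augIdeal3_eq_map]
  exact Ideal.IsMaximal.map_of_surjective_of_ker_le Ideal.Quotient.mk_surjective
    (Ideal.mk_ker.trans_le virtIdeal3_le_ker_eval)

theorem exists_notMem_augIdeal3_mul_eq_zero {a : VirtK3} (ha : a ∈ augIdeal3 ^ 2) :
    ∃ s ∉ augIdeal3, s * a = 0 := by
  rw [augIdeal3_eq_map, ← Ideal.map_pow,
    Ideal.mem_map_iff_of_surjective _ Ideal.Quotient.mk_surjective] at ha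
  obtain ⟨p, hp, rfl⟩ := ha
  refine ⟨Ideal.Quotient.mk virtIdeal3 (X 0 ^ 2 + X 0 + 1), ?_, ?_⟩
  · rw [augIdeal3_eq_map, Ideal.mem_quotient_iff_mem virtIdeal3_le_ker_eval, RingHom.mem_ker]
    norm_num
  · rw [← map_mul, Ideal.Quotient.eq_zero_iff_mem, mul_comm]
    simpa using sq_le_colon_virtIdeal3 hp

noncomputable def quotientAugIdeal3SqAlgEquiv :
    (VirtK3 ⧸ augIdeal3 ^ 2) ≃ₐ[ℂ] MvPolynomial (Fin 3) ℂ ⧸ idealOfVars (Fin 3) ℂ ^ 2 :=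
  (Ideal.quotientEquivAlgOfEq ℂ (by rw [augIdeal3_eq_map, ← Ideal.map_pow]; rfl)).trans
    ((DoubleQuot.quotQuotEquivQuotOfLEₐ ℂ virtIdeal3_le_sq).trans
      (Ideal.quotientEquivAlg _ _ (translate 1)
        (by rw [Ideal.map_pow, map_translate_idealOfVars, ker_eval_eq_span_X_sub_C])).symm)

theorem span_X_fin_three :
    Ideal.span {(X 0 : MvPolynomial (Fin 3) ℂ), X 1, X 2} = idealOfVars (Fin 3) ℂ := by
  rw [idealOfVars]
  congr 1
  ext
  simp [Fin.exists_fin_succ, eq_comm]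

theorem virtual_Ktheory_P13_HKRC :
    ∃ hm : augIdeal3.IsMaximal,
      letI := hm.isPrime
      Nonempty (Localization.AtPrime augIdeal3 ≃ₐ[ℂ] SquareZeroThreeVars) ∧
      Module.finrank ℂ (Localization.AtPrime augIdeal3) = 4 ∧
      IsLocalRing.maximalIdeal (Localization.AtPrime augIdeal3) ^ 2 = ⊥ := by
  have := augIdeal3_isMaximal
  have hann : ∀ a ∈ augIdeal3 ^ 2, ∃ s ∉ augIdeal3, s * a = 0 :=
    fun _ => exists_notMem_augIdeal3_mul_eq_zero
  obtain ⟨e⟩ := Localization.AtPrime.nonempty_algEquiv_quotient_pow ℂ hann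
  let e' := e.trans quotientAugIdeal3SqAlgEquiv
  refine ⟨this, ⟨e'.trans (Ideal.quotientEquivAlgOfEq ℂ (by rw [span_X_fin_three]))⟩, ?_,
    Localization.AtPrime.maximalIdeal_pow_eq_bot hann⟩
  rw [e'.toLinearEquiv.finrank_eq, finrank_quotient_idealOfVars_sq, Fintype.card_fin]
end
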